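/- arXiv:1009.0068 — 2 statements merged into one kernel-verified Lean document; each statement's English description precedes it below -/
import Mathlib

section
/- For an exponentially distributed random variable X with rate λ > 0 and fixed r with 0 < r < 1, lim_{ρ→∞} log P(log(1 + ρX) < r log ρ) / log ρ = r - 1. -/
open Filter Real MeasureTheory Topology

/-!
For `ρ > 1` and `x > 0`, `log (1 + ρ x) < r log ρ` iff `x < t_ρ := (ρ ^ r - 1) / ρ`. Since `X > 0`
almost surely and the CDF is continuous, the outage probability is exactly `1 - exp (-λ t_ρ)`.
As `t_ρ → 0`, this is `~ λ t_ρ ~ λ ρ ^ (r - 1)`, and a factor tending to a positive constant does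
not change the limit of `log (·) / log ρ`.
-/

lemma tendsto_log_div_of_tendsto_div {α : Type*} {l : Filter α} {f g h : α → ℝ} {L a : ℝ}
    (hL : 0 < L) (hfg : Tendsto (fun x => f x / g x) l (𝓝 L)) (hh : Tendsto h l atTop)
    (hg : Tendsto (fun x => log (g x) / h x) l (𝓝 a)) :
    Tendsto (fun x => log (f x) / h x) l (𝓝 a) := by
  have hlog : Tendsto (fun x => log (f x / g x)) l (𝓝 (log L)) :=
    (continuousAt_log hL.ne').tendsto.comp hfg
  refine (add_zero a ▸ hg.add (hlog.div_atTop hh)).congr' ?_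
  filter_upwards [hfg.eventually_ne hL.ne'] with x hx
  obtain ⟨hfx, hgx⟩ := div_ne_zero_iff.mp hx
  rw [← add_div, log_div hfx hgx, add_sub_cancel]

lemma tendsto_one_sub_exp_neg_div_self :
    Tendsto (fun u => (1 - exp (-u)) / u) (𝓝[≠] 0) (𝓝 1) := by
  have hd : HasDerivAt (fun u => 1 - exp (-u)) 1 0 := by
    simpa using ((hasDerivAt_exp (-0)).comp 0 (hasDerivAt_neg 0)).const_sub 1
  refine (hasDerivAt_iff_tendsto_slope.mp hd).congr fun u => ?_
  simp [slope_def_field]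

noncomputable def outageThreshold (r ρ : ℝ) : ℝ := (ρ ^ r - 1) / ρ

lemma outageThreshold_pos {r ρ : ℝ} (hr : 0 < r) (hρ : 1 < ρ) : 0 < outageThreshold r ρ :=
  div_pos (by linarith [one_lt_rpow hρ hr]) (by linarith)

lemma log_one_add_mul_lt_iff {r ρ x : ℝ} (hρ : 0 < ρ) (hx : 0 ≤ x) :
    log (1 + ρ * x) < r * log ρ ↔ x < outageThreshold r ρ := by
  rw [← log_rpow hρ, log_lt_log_iff (by positivity) (by positivity), outageThreshold,
    lt_div_iff₀ hρ]
  constructor <;> intro h <;> linarith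

lemma tendsto_outageThreshold_div_rpow {r : ℝ} (hr : 0 < r) :
    Tendsto (fun ρ => outageThreshold r ρ / ρ ^ (r - 1)) atTop (𝓝 1) := by
  have h : Tendsto (fun ρ : ℝ => 1 - ρ ^ (-r)) atTop (𝓝 1) := by
    simpa using tendsto_const_nhds.sub (tendsto_rpow_neg_atTop hr)
  refine h.congr' ?_
  filter_upwards [eventually_gt_atTop 0] with ρ hρ
  rw [outageThreshold, div_div, ← rpow_one_add' hρ.le (by linarith), add_sub_cancel,
    rpow_neg hρ.le, sub_div, div_self (rpow_pos_of_pos hρ r).ne', one_div]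

lemma tendsto_log_one_sub_exp_outageThreshold {c r : ℝ} (hc : 0 < c) (hr : 0 < r)
    (hr1 : r < 1) :
    Tendsto (fun ρ => log (1 - exp (-c * outageThreshold r ρ)) / log ρ) atTop (𝓝 (r - 1)) := by
  have hpow : Tendsto (fun ρ : ℝ => ρ ^ (r - 1)) atTop (𝓝 0) := by
    simpa using tendsto_rpow_neg_atTop (by linarith : 0 < 1 - r)
  have hu : Tendsto (fun ρ => c * outageThreshold r ρ / ρ ^ (r - 1)) atTop (𝓝 c) := by
    simpa [mul_div_assoc] using (tendsto_outageThreshold_div_rpow hr).const_mul c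
  have hu0 : Tendsto (fun ρ => c * outageThreshold r ρ) atTop (𝓝[≠] 0) := by
    refine tendsto_nhdsWithin_iff.mpr ⟨?_, ?_⟩
    · have h := hu.mul hpow
      rw [mul_zero] at h
      refine h.congr' ?_
      filter_upwards [eventually_gt_atTop 0] with ρ hρ
      rw [div_mul_cancel₀ _ (rpow_pos_of_pos hρ _).ne']
    · filter_upwards [eventually_gt_atTop 1] with ρ hρ
      exact (mul_pos hc (outageThreshold_pos hr hρ)).ne'
  refine tendsto_log_div_of_tendsto_div (g := fun ρ => ρ ^ (r - 1)) hc ?_ tendsto_log_atTop ?_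
  · refine (one_mul c ▸ (tendsto_one_sub_exp_neg_div_self.comp hu0).mul hu).congr' ?_
    filter_upwards [hu0 self_mem_nhdsWithin] with ρ hρ
    simp only [Function.comp_apply, neg_mul]
    rw [div_mul_div_cancel₀ hρ]
  · refine tendsto_const_nhds.congr' ?_
    filter_upwards [eventually_gt_atTop 1] with ρ hρ
    rw [log_rpow (by linarith), mul_div_cancel_right₀ _ (log_pos hρ).ne']

lemma toReal_measure_setOf_lt_of_cdf {Ω : Type*} [MeasurableSpace Ω] (μ : Measure Ω)
    [IsFiniteMeasure μ] (X : Ω → ℝ) {F : ℝ → ℝ} {t : ℝ} (hF : ContinuousWithinAt F (Set.Iio t) t)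
    (hX : ∀ᶠ s in 𝓝[<] t, (μ {ω | X ω ≤ s}).toReal = F s) :
    (μ {ω | X ω < t}).toReal = F t := by
  obtain ⟨s, hs_mono, hs_lt, hs_lim⟩ := exists_seq_strictMono_tendsto' (sub_one_lt t)
  have hs : Tendsto s atTop (𝓝[<] t) :=
    tendsto_nhdsWithin_iff.mpr ⟨hs_lim, Eventually.of_forall fun n => (hs_lt n).2⟩
  have hmono : Monotone fun n => {ω | X ω ≤ s n} :=
    fun m n hmn ω (hω : X ω ≤ s m) => hω.trans (hs_mono.monotone hmn)
  have hunion : ⋃ n, {ω | X ω ≤ s n} = {ω | X ω < t} := by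
    ext ω
    simp only [Set.mem_iUnion, Set.mem_ofPred_eq]
    constructor
    · rintro ⟨n, hn⟩
      exact hn.trans_lt (hs_lt n).2
    · intro h
      exact ((hs_lim.eventually (lt_mem_nhds h)).exists).imp fun n hn => hn.le
  have hlim := (ENNReal.tendsto_toReal (measure_ne_top μ _)).comp
    (tendsto_measure_iUnion_atTop (μ := μ) hmono)
  rw [hunion] at hlim
  refine tendsto_nhds_unique hlim ((hF.tendsto.comp hs).congr' ?_)
  filter_upwards [hs.eventually hX] with n hn using hn.symm

lemma toReal_measure_outage_eq {Ω : Type*} [MeasurableSpace Ω] (μ : Measure Ω)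
    [IsFiniteMeasure μ] (X : Ω → ℝ) {F : ℝ → ℝ} (hF : Continuous F) (hF0 : F 0 = 0)
    (hX : ∀ x : ℝ, 0 ≤ x → (μ {ω | X ω ≤ x}).toReal = F x) {r ρ : ℝ} (hr : 0 < r) (hρ : 1 < ρ) :
    (μ {ω | log (1 + ρ * X ω) < r * log ρ}).toReal = F (outageThreshold r ρ) := by
  have hpos : ∀ᵐ ω ∂μ, 0 < X ω := by
    refine ae_iff.mpr ?_
    simp only [not_lt]
    have h0 := hX 0 le_rfl
    rwa [hF0, ENNReal.toReal_eq_zero_iff, or_iff_left (measure_ne_top μ _)] at h0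
  -- `X ≤ 0`, where `log (1 + ρ * X)` takes junk values, is a null event.
  have hevent : {ω | log (1 + ρ * X ω) < r * log ρ} =ᵐ[μ] {ω | X ω < outageThreshold r ρ} := by
    filter_upwards [hpos] with ω hω
    exact propext (log_one_add_mul_lt_iff (by linarith) hω.le)
  rw [measure_congr hevent]
  refine toReal_measure_setOf_lt_of_cdf μ X hF.continuousWithinAt ?_
  filter_upwards [nhdsWithin_le_nhds (lt_mem_nhds (outageThreshold_pos hr hρ))] with s hs
  exact hX s hs.le

/-- For `X ~ Exp(λ)` and `0 < r < 1`,
`lim_{ρ→∞} log P(log(1 + ρX) < r log ρ) / log ρ = r - 1`. -/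
theorem stmt_1 {Ω : Type*} [MeasurableSpace Ω] (μ : Measure Ω) [IsProbabilityMeasure μ]
    (X : Ω → ℝ) (lam r : ℝ) (hlam : 0 < lam) (hr : 0 < r) (hr1 : r < 1)
    (hX : ∀ x : ℝ, 0 ≤ x → (μ {ω | X ω ≤ x}).toReal = 1 - Real.exp (-lam * x)) :
    Tendsto (fun ρ : ℝ =>
        Real.log (μ {ω | Real.log (1 + ρ * X ω) < r * Real.log ρ}).toReal / Real.log ρ)
      atTop (nhds (r - 1)) := by
  have hF : Continuous fun x => 1 - exp (-lam * x) := by fun_prop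
  refine (tendsto_log_one_sub_exp_outageThreshold hlam hr hr1).congr' ?_
  filter_upwards [eventually_gt_atTop 1] with ρ hρ
  rw [toReal_measure_outage_eq μ X hF (by simp) hX hr hρ]
end

section
/- Let X₁, …, X_N be independent exponentially distributed random variables with rates λ₁, …, λ_N > 0, fix 0 < r < 1/2, set th(ρ) = (2^{2r log₂ ρ} - 1)/ρ (equivalently threshold (ρ^{2r}-1)/ρ), and for a fixed subset Γ ⊆ {1,…,N} of size t let p_Γ(ρ) = ∏_{i∈Γ} exp(-λ_i th(ρ)) · ∏_{i∉Γ} (1 - exp(-λ_i th(ρ))). Then lim_{ρ→∞} log p_Γ(ρ) / log ρ = (2r-1)(N-t). -/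
/-! On the scale `log ρ` only exponents survive. The threshold `th(ρ) = ρ^{2r-1} (1 - ρ^{-2r})`
tends to `0` with exponent `2r - 1`; hence each decoding factor `e^{-λ th(ρ)}` tends to `1` and
has exponent `0`, while each failure factor `1 - e^{-λ th(ρ)} ∼ λ th(ρ)` has exponent `2r - 1`.
Exponents add over the `N - t` failure factors. -/

open Filter Real Topology

section LogOrder

variable {α : Type*} {l : Filter α} {L : α → ℝ}

theorem tendsto_log_div_of_tendsto_div_s3 {u v : α → ℝ} {a c : ℝ} (hc : c ≠ 0)
    (hL : Tendsto L l atTop) (huv : Tendsto (fun x => u x / v x) l (𝓝 c))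
    (hv : Tendsto (fun x => log (v x) / L x) l (𝓝 a)) :
    Tendsto (fun x => log (u x) / L x) l (𝓝 a) := by
  have hlog_ratio : Tendsto (fun x => log (u x / v x) / L x) l (𝓝 0) :=
    ((continuousAt_log hc).tendsto.comp huv).div_atTop hL
  refine (by simpa using hlog_ratio.add hv : Tendsto _ l (𝓝 a)).congr' ?_
  filter_upwards [huv.eventually_ne hc] with x hx
  rw [div_ne_zero_iff] at hx
  rw [log_div hx.1 hx.2, ← add_div, sub_add_cancel]

theorem tendsto_log_mul_div {u v : α → ℝ} {a b : ℝ}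
    (hu0 : ∀ᶠ x in l, u x ≠ 0) (hv0 : ∀ᶠ x in l, v x ≠ 0)
    (hu : Tendsto (fun x => log (u x) / L x) l (𝓝 a))
    (hv : Tendsto (fun x => log (v x) / L x) l (𝓝 b)) :
    Tendsto (fun x => log (u x * v x) / L x) l (𝓝 (a + b)) := by
  refine (hu.add hv).congr' ?_
  filter_upwards [hu0, hv0] with x hux hvx
  rw [log_mul hux hvx, add_div]

theorem tendsto_log_prod_div {ι : Type*} (s : Finset ι) {f : ι → α → ℝ} {a : ι → ℝ}
    (hf0 : ∀ i ∈ s, ∀ᶠ x in l, f i x ≠ 0)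
    (hf : ∀ i ∈ s, Tendsto (fun x => log (f i x) / L x) l (𝓝 (a i))) :
    Tendsto (fun x => log (∏ i ∈ s, f i x) / L x) l (𝓝 (∑ i ∈ s, a i)) := by
  refine (tendsto_finsetSum s hf).congr' ?_
  filter_upwards [(s.eventually_all).2 hf0] with x hx
  rw [log_prod hx, Finset.sum_div]

theorem tendsto_log_one_sub_exp_div {x : α → ℝ} {lam a : ℝ} (hlam : lam ≠ 0)
    (hL : Tendsto L l atTop) (hx : Tendsto x l (𝓝[≠] 0))
    (hlog : Tendsto (fun y => log (x y) / L y) l (𝓝 a)) :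
    Tendsto (fun y => log (1 - exp (-lam * x y)) / L y) l (𝓝 a) := by
  have hderiv : HasDerivAt (fun z => 1 - exp (-lam * z)) lam 0 := by
    simpa using ((hasDerivAt_id (0 : ℝ)).const_mul (-lam)).exp.const_sub 1
  have hslope := (hasDerivAt_iff_tendsto_slope.1 hderiv).comp hx
  refine tendsto_log_div_of_tendsto_div_s3 hlam hL (hslope.congr fun y => ?_) hlog
  simp [slope_def_field, Function.comp]

end LogOrder

section Threshold

variable {r : ℝ}

theorem tendsto_threshold_div_rpow (hr : 0 < r) :
    Tendsto (fun ρ : ℝ => (ρ ^ (2 * r) - 1) / ρ / ρ ^ (2 * r - 1)) atTop (𝓝 1) := by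
  have h := tendsto_const_nhds (x := (1 : ℝ)).sub (tendsto_rpow_neg_atTop (y := 2 * r) (by linarith))
  rw [sub_zero] at h
  refine h.congr' ?_
  filter_upwards [eventually_gt_atTop 0] with ρ hρ
  rw [rpow_sub_one hρ.ne', rpow_neg hρ.le]
  field_simp [(rpow_pos_of_pos hρ (2 * r)).ne']

theorem tendsto_log_threshold_div_log (hr : 0 < r) :
    Tendsto (fun ρ : ℝ => log ((ρ ^ (2 * r) - 1) / ρ) / log ρ) atTop (𝓝 (2 * r - 1)) := by
  refine tendsto_log_div_of_tendsto_div_s3 one_ne_zero tendsto_log_atTop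
    (tendsto_threshold_div_rpow hr) (tendsto_const_nhds.congr' ?_)
  filter_upwards [eventually_gt_atTop 1] with ρ hρ
  rw [log_rpow (by linarith), mul_div_cancel_right₀ _ (log_pos hρ).ne']

theorem tendsto_threshold_nhdsNE_zero (hr : 0 < r) (hr2 : r < 1 / 2) :
    Tendsto (fun ρ : ℝ => (ρ ^ (2 * r) - 1) / ρ) atTop (𝓝[≠] 0) := by
  have hratio := tendsto_threshold_div_rpow hr
  have hpow : Tendsto (fun ρ : ℝ => ρ ^ (2 * r - 1)) atTop (𝓝 0) := by
    simpa using tendsto_rpow_neg_atTop (y := 1 - 2 * r) (by linarith)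
  refine tendsto_nhdsWithin_iff.2 ⟨?_, ?_⟩
  · have hlim : Tendsto (fun ρ : ℝ => (ρ ^ (2 * r) - 1) / ρ / ρ ^ (2 * r - 1) * ρ ^ (2 * r - 1))
        atTop (𝓝 0) := by simpa using hratio.mul hpow
    refine hlim.congr' ?_
    filter_upwards [eventually_gt_atTop 0] with ρ hρ
    rw [div_mul_cancel₀ _ (rpow_pos_of_pos hρ _).ne']
  · filter_upwards [hratio.eventually_ne one_ne_zero] with ρ hρ
    exact (div_ne_zero_iff.1 hρ).1

end Threshold

/-- For rates `λᵢ > 0`, `0 < r < 1/2`, threshold `th(ρ) = (ρ^{2r} - 1)/ρ`, and a fixed subset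
`Γ` of size `t`, the probability `p_Γ(ρ) = ∏_{i∈Γ} e^{-λᵢ th(ρ)} ∏_{i∉Γ} (1 - e^{-λᵢ th(ρ)})`
satisfies `lim_{ρ→∞} log p_Γ(ρ) / log ρ = (2r-1)(N-t)`. -/
theorem stmt_3 (N : ℕ) (lam : Fin N → ℝ) (hlam : ∀ i, 0 < lam i)
    (r : ℝ) (hr : 0 < r) (hr2 : r < 1 / 2)
    (Γ : Finset (Fin N)) (t : ℕ) (hΓ : Γ.card = t) :
    Tendsto (fun ρ : ℝ =>
        Real.log
          ((∏ i ∈ Γ, Real.exp (-lam i * ((ρ ^ (2 * r) - 1) / ρ))) *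
            ∏ i ∈ Γᶜ, (1 - Real.exp (-lam i * ((ρ ^ (2 * r) - 1) / ρ)))) / Real.log ρ)
      atTop (nhds ((2 * r - 1) * (N - t))) := by
  have hth := tendsto_threshold_nhdsNE_zero hr hr2
  have hdecoded : Tendsto (fun ρ : ℝ => log (∏ i ∈ Γ, exp (-lam i * ((ρ ^ (2 * r) - 1) / ρ)))
      / log ρ) atTop (𝓝 0) := by
    have hlog_exp : ∀ i ∈ Γ, Tendsto (fun ρ : ℝ => log (exp (-lam i * ((ρ ^ (2 * r) - 1) / ρ)))
        / log ρ) atTop (𝓝 0) := fun i _ => by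
      simpa using ((tendsto_nhds_of_tendsto_nhdsWithin hth).const_mul (-lam i)).div_atTop
        tendsto_log_atTop
    simpa using tendsto_log_prod_div Γ (fun i _ => .of_forall fun _ => exp_ne_zero _) hlog_exp
  have hfailed_ne : ∀ i ∈ Γᶜ, ∀ᶠ ρ : ℝ in atTop, 1 - exp (-lam i * ((ρ ^ (2 * r) - 1) / ρ)) ≠ 0 :=
    fun i _ => (eventually_mem_of_tendsto_nhdsWithin hth).mono fun ρ hρ => by
      rw [sub_ne_zero, ne_comm, Ne, exp_eq_one_iff]
      exact mul_ne_zero (neg_ne_zero.2 (hlam i).ne') hρ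
  have hfailed := tendsto_log_prod_div Γᶜ hfailed_ne fun i _ =>
    tendsto_log_one_sub_exp_div (hlam i).ne' tendsto_log_atTop hth (tendsto_log_threshold_div_log hr)
  have hcard : ∑ _i ∈ Γᶜ, (2 * r - 1) = (2 * r - 1) * (N - t) := by
    rw [Finset.sum_const, Finset.card_compl, Fintype.card_fin, nsmul_eq_mul,
      Nat.cast_sub (Γ.card_le_univ.trans_eq (Fintype.card_fin N)), hΓ, mul_comm]
  rw [← hcard, ← zero_add (∑ _i ∈ Γᶜ, _)]
  exact tendsto_log_mul_div (.of_forall fun _ => Finset.prod_ne_zero_iff.2 fun i _ => exp_ne_zero _)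
    ((Γᶜ.eventually_all).2 hfailed_ne |>.mono fun _ => Finset.prod_ne_zero_iff.2) hdecoded hfailed
end
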